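/- arXiv:1811.12924 — 2 statements merged into one kernel-verified Lean document; each statement's English description precedes it below -/
import Mathlib

section
/- Let σ be a permutation of the n jobs such that w_{σ(k)}/p_{σ(k)} is nonincreasing in k (a WSEPT order, obtained by giving strict priority to jobs with larger weight-to-processing-time ratio). Then F(σ) ≤ F(τ) for every permutation τ of the n jobs; i.e., the WSEPT rule minimizes the weighted sum of completion times on a single machine. -/
/-!
Expanding completion times, `F(ρ) = ∑ p a * w b` over all ordered pairs of jobs `(a, b)` with `a`
processed no later than `b` under `ρ`. Symmetrizing, `2 F(ρ)` is a sum over pairs `{a, b}` in which a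
pair of distinct jobs contributes `p a * w b` or `p b * w a` according to which of the two comes
first. The WSEPT order always puts first the job that makes this contribution the smaller one.
-/

open Finset

/-- Completion time of the job in position `k` under schedule `σ`:
the sum of the processing times of the jobs in positions `0, …, k`. -/
noncomputable def complTime {n : ℕ} (p : Fin n → ℝ) (σ : Equiv.Perm (Fin n))
    (k : Fin n) : ℝ :=
  ∑ i ∈ Finset.Iic k, p (σ i)

/-- Weighted sum of completion times of schedule `σ`. -/
noncomputable def wsumCompl {n : ℕ} (p w : Fin n → ℝ) (σ : Equiv.Perm (Fin n)) : ℝ :=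
  ∑ k, w (σ k) * complTime p σ k

section PairwiseCost

variable {n : ℕ} (p w : Fin n → ℝ)

noncomputable def precCost (ρ : Equiv.Perm (Fin n)) (a b : Fin n) : ℝ :=
  if ρ.symm a ≤ ρ.symm b then p a * w b else 0

theorem wsumCompl_eq_sum_precCost (ρ : Equiv.Perm (Fin n)) :
    wsumCompl p w ρ = ∑ b, ∑ a, precCost p w ρ a b := by
  rw [← Equiv.sum_comp ρ]
  refine sum_congr rfl fun k _ => ?_
  rw [complTime, mul_sum, ← Equiv.sum_comp ρ (fun a => precCost p w ρ a (ρ k))]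
  simp only [precCost, Equiv.symm_apply_apply, ← sum_filter]
  exact sum_congr (by ext; simp) fun i _ => mul_comm _ _

theorem two_mul_wsumCompl (ρ : Equiv.Perm (Fin n)) :
    2 * wsumCompl p w ρ = ∑ b, ∑ a, (precCost p w ρ a b + precCost p w ρ b a) := by
  simp only [sum_add_distrib, two_mul, wsumCompl_eq_sum_precCost]
  rw [sum_comm (f := fun b a => precCost p w ρ b a)]

theorem precCost_add_precCost_of_ne (ρ : Equiv.Perm (Fin n)) {a b : Fin n} (hab : a ≠ b) :
    precCost p w ρ a b + precCost p w ρ b a =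
      if ρ.symm a ≤ ρ.symm b then p a * w b else p b * w a := by
  rcases lt_or_gt_of_ne (ρ.symm.injective.ne hab) with h | h <;>
    simp [precCost, h.le, h.not_ge]

theorem min_le_precCost_add_precCost (ρ : Equiv.Perm (Fin n)) {a b : Fin n} (hab : a ≠ b) :
    min (p a * w b) (p b * w a) ≤ precCost p w ρ a b + precCost p w ρ b a := by
  rw [precCost_add_precCost_of_ne p w ρ hab]
  split_ifs
  exacts [min_le_left _ _, min_le_right _ _]

variable {p w}

theorem mul_le_mul_of_antitone_ratio (hp : ∀ j, 0 < p j) {σ : Equiv.Perm (Fin n)}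
    (hσ : Antitone fun k => w (σ k) / p (σ k)) {a b : Fin n} (hab : σ.symm a ≤ σ.symm b) :
    p a * w b ≤ p b * w a := by
  have h := hσ hab
  simp only [Equiv.apply_symm_apply] at h
  rw [div_le_div_iff₀ (hp b) (hp a)] at h
  linarith

theorem precCost_add_precCost_eq_min (hp : ∀ j, 0 < p j) {σ : Equiv.Perm (Fin n)}
    (hσ : Antitone fun k => w (σ k) / p (σ k)) {a b : Fin n} (hab : a ≠ b) :
    precCost p w σ a b + precCost p w σ b a = min (p a * w b) (p b * w a) := by
  rw [precCost_add_precCost_of_ne p w σ hab]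
  split_ifs with h
  · exact (min_eq_left (mul_le_mul_of_antitone_ratio hp hσ h)).symm
  · exact (min_eq_right (mul_le_mul_of_antitone_ratio hp hσ (le_of_not_ge h))).symm

theorem wsumCompl_le_of_antitone_ratio (hp : ∀ j, 0 < p j) {σ : Equiv.Perm (Fin n)}
    (hσ : Antitone fun k => w (σ k) / p (σ k)) (τ : Equiv.Perm (Fin n)) :
    wsumCompl p w σ ≤ wsumCompl p w τ := by
  suffices 2 * wsumCompl p w σ ≤ 2 * wsumCompl p w τ by linarith
  rw [two_mul_wsumCompl, two_mul_wsumCompl]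
  refine sum_le_sum fun b _ => sum_le_sum fun a _ => ?_
  rcases eq_or_ne a b with rfl | hab
  · simp [precCost]
  · rw [precCost_add_precCost_eq_min hp hσ hab]
    exact min_le_precCost_add_precCost p w τ hab

end PairwiseCost

theorem wsept_minimizes_weighted_completion_time_general
    (n : ℕ) (p w : Fin n → ℝ)
    (hp : ∀ j, 0 < p j)
    (σ : Equiv.Perm (Fin n))
    (hσ : ∀ k k' : Fin n, k ≤ k' → w (σ k') / p (σ k') ≤ w (σ k) / p (σ k))
    (τ : Equiv.Perm (Fin n)) :
    wsumCompl p w σ ≤ wsumCompl p w τ :=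
  wsumCompl_le_of_antitone_ratio hp (fun k k' h => hσ k k' h) τ

/-- **WSEPT optimality.** If `σ` is a WSEPT order, i.e. `w (σ k) / p (σ k)` is
nonincreasing in the position `k`, then `σ` minimizes the weighted sum of
completion times over all permutations `τ`. -/
theorem wsept_minimizes_weighted_completion_time
    (n : ℕ) (p w : Fin n → ℝ)
    (hp : ∀ j, 0 < p j) (hw : ∀ j, 0 ≤ w j)
    (σ : Equiv.Perm (Fin n))
    (hσ : ∀ k k' : Fin n, k ≤ k' → w (σ k') / p (σ k') ≤ w (σ k) / p (σ k))
    (τ : Equiv.Perm (Fin n)) :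
    wsumCompl p w σ ≤ wsumCompl p w τ :=
  wsept_minimizes_weighted_completion_time_general n p w hp σ hσ τ
end

section
/- If a permutation σ minimizes the weighted sum of completion times, i.e., F(σ) ≤ F(τ) for every permutation τ, then σ is ordered according to the WSEPT rule at every adjacent pair: for every position k < n−1, w_{σ(k)} · p_{σ(k+1)} ≥ w_{σ(k+1)} · p_{σ(k)}, equivalently w_{σ(k)}/p_{σ(k)} ≥ w_{σ(k+1)}/p_{σ(k+1)}. -/
/-! Exchanging the jobs in two adjacent positions `a`, `a + 1` leaves every completion time
except the one at position `a` unchanged, so the weighted sum changes by exactly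
`w (σ a) * p (σ (a + 1)) - w (σ (a + 1)) * p (σ a)`. Optimality of `σ` makes this
exchange cost nonnegative, which is the adjacent WSEPT inequality. -/

section AdjacentSwap

variable {n : ℕ} (p w : Fin n → ℝ) (σ : Equiv.Perm (Fin n)) {a b : Fin n}

lemma complTime_of_val_eq_succ (hab : (b : ℕ) = a + 1) :
    complTime p σ b = complTime p σ a + p (σ b) := by
  have hIic : Finset.Iic b = insert b (Finset.Iic a) := by
    ext j
    simp only [Finset.mem_Iic, Finset.mem_insert, Fin.le_def, Fin.ext_iff]
    omega
  have hb : b ∉ Finset.Iic a := by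
    simp only [Finset.mem_Iic, Fin.le_def]
    omega
  rw [complTime, complTime, hIic, Finset.sum_insert hb, add_comm]

lemma swap_le_iff_of_ne (hab : (b : ℕ) = a + 1) {i : Fin n} (hi : i ≠ a) (j : Fin n) :
    Equiv.swap a b j ≤ i ↔ j ≤ i := by
  have hi' : (i : ℕ) ≠ a := Fin.val_ne_of_ne hi
  rcases eq_or_ne j a with rfl | hja
  · simp only [Equiv.swap_apply_left, Fin.le_def]
    omega
  rcases eq_or_ne j b with rfl | hjb
  · simp only [Equiv.swap_apply_right, Fin.le_def]
    omega
  · rw [Equiv.swap_apply_of_ne_of_ne hja hjb]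

lemma complTime_mul_swap_of_ne (hab : (b : ℕ) = a + 1) {i : Fin n} (hi : i ≠ a) :
    complTime p (σ * Equiv.swap a b) i = complTime p σ i :=
  Finset.sum_equiv (Equiv.swap a b)
    (fun j => by simp only [Finset.mem_Iic, swap_le_iff_of_ne hab hi]) (fun _ _ => rfl)

lemma complTime_mul_swap_self (hab : (b : ℕ) = a + 1) :
    complTime p (σ * Equiv.swap a b) a = complTime p σ a + p (σ b) - p (σ a) := by
  have hba : b ≠ a := fun h => by rw [h] at hab; omega
  have h := complTime_of_val_eq_succ p (σ * Equiv.swap a b) hab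
  rw [complTime_mul_swap_of_ne p σ hab hba, complTime_of_val_eq_succ p σ hab] at h
  simp only [Equiv.Perm.mul_apply, Equiv.swap_apply_right] at h
  linarith

theorem wsumCompl_mul_swap (hab : (b : ℕ) = a + 1) :
    wsumCompl p w (σ * Equiv.swap a b)
      = wsumCompl p w σ + (w (σ a) * p (σ b) - w (σ b) * p (σ a)) := by
  have hab' : a ≠ b := fun h => by rw [← h] at hab; omega
  set τ := σ * Equiv.swap a b
  have hdiff : wsumCompl p w τ - wsumCompl p w σ
      = (w (τ a) * complTime p τ a - w (σ a) * complTime p σ a)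
        + (w (τ b) * complTime p τ b - w (σ b) * complTime p σ b) := by
    rw [wsumCompl, wsumCompl, ← Finset.sum_sub_distrib]
    refine Fintype.sum_eq_add a b hab' fun i ⟨hia, hib⟩ => ?_
    rw [complTime_mul_swap_of_ne p σ hab hia]
    simp [τ, Equiv.swap_apply_of_ne_of_ne hia hib]
  rw [complTime_mul_swap_self p σ hab, complTime_mul_swap_of_ne p σ hab hab'.symm,
    complTime_of_val_eq_succ p σ hab] at hdiff
  simp only [τ, Equiv.Perm.mul_apply, Equiv.swap_apply_left, Equiv.swap_apply_right] at hdiff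
  linarith

end AdjacentSwap

/-- **Optimal schedules are WSEPT-ordered at every adjacent pair.**  If `σ`
minimizes the weighted sum of completion times, then for every adjacent pair of
positions `k`, `k+1` we have
`w (σ k) * p (σ (k+1)) ≥ w (σ (k+1)) * p (σ k)`, equivalently
`w (σ k) / p (σ k) ≥ w (σ (k+1)) / p (σ (k+1))`. -/
theorem optimal_is_adjacent_wsept
    (n : ℕ) (p w : Fin n → ℝ)
    (hp : ∀ j, 0 < p j)
    (σ : Equiv.Perm (Fin n))
    (hopt : ∀ τ : Equiv.Perm (Fin n), wsumCompl p w σ ≤ wsumCompl p w τ)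
    (k : ℕ) (hk : k + 1 < n) :
    w (σ ⟨k + 1, hk⟩) * p (σ ⟨k, by omega⟩)
      ≤ w (σ ⟨k, by omega⟩) * p (σ ⟨k + 1, hk⟩)
    ∧ w (σ ⟨k + 1, hk⟩) / p (σ ⟨k + 1, hk⟩)
      ≤ w (σ ⟨k, by omega⟩) / p (σ ⟨k, by omega⟩) := by
  have hswap := hopt (σ * Equiv.swap ⟨k, by omega⟩ ⟨k + 1, hk⟩)
  rw [wsumCompl_mul_swap p w σ rfl] at hswap
  have hmul : w (σ ⟨k + 1, hk⟩) * p (σ ⟨k, by omega⟩)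
      ≤ w (σ ⟨k, by omega⟩) * p (σ ⟨k + 1, hk⟩) := by linarith
  exact ⟨hmul, (div_le_div_iff₀ (hp _) (hp _)).2 hmul⟩
end
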